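/- If Π is a normal-form derivation in BPR that does not end in an application of an introduction rule, then Π contains at least one undischarged hypothesis (proof assumption or refutation assumption). -/
import Mathlib


/-- Atomic propositions; the set `At` includes the units `⊥` and `⊤`. -/
inductive Atom : Type where
  | bot : Atom
  | top : Atom
  | prop : ℕ → Atom
deriving DecidableEq

/-- Formulas over `At`, built with `∧`, `∨`, `→` and co-implication `↤`. -/
inductive Formula : Type where
  | atom : Atom → Formula
  | conj : Formula → Formula → Formula
  | disj : Formula → Formula → Formula
  | impl : Formula → Formula → Formula
  | coimpl : Formula → Formula → Formula
deriving DecidableEq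

abbrev Formula.bot : Formula := .atom .bot
abbrev Formula.top : Formula := .atom .top

/-- A formula is atomic iff it is a member of `At` (including `⊥` and `⊤`). -/
def Formula.isAtomic : Formula → Prop
  | .atom _ => True
  | _ => False

/-- Polarity of a statement: proof (`pos`) or refutation (`neg`). -/
inductive Side : Type where
  | pos : Side
  | neg : Side
deriving DecidableEq
/-- Natural deduction derivations of the bilateral system `BPR`.
`Deriv Γ Δ s φ` is a deduction of `φ` as a proof (`s = pos`) or refutation
(`s = neg`) from proof assumptions among `Γ` and refutation assumptions
(counterassumptions) among `Δ`. -/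
inductive Deriv : Set Formula → Set Formula → Side → Formula → Type where
  | hypP {Γ Δ : Set Formula} {φ : Formula} (h : φ ∈ Γ) : Deriv Γ Δ .pos φ
  | hypN {Γ Δ : Set Formula} {φ : Formula} (h : φ ∈ Δ) : Deriv Γ Δ .neg φ
  -- ⊤(+) and ⊥(−) axioms
  | topP {Γ Δ} : Deriv Γ Δ .pos Formula.top
  | botN {Γ Δ} : Deriv Γ Δ .neg Formula.bot
  -- implication
  | impI {Γ Δ φ ψ} : Deriv (insert φ Γ) Δ .pos ψ → Deriv Γ Δ .pos (.impl φ ψ)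
  | impE {Γ Δ φ ψ} : Deriv Γ Δ .pos (.impl φ ψ) → Deriv Γ Δ .pos φ → Deriv Γ Δ .pos ψ
  | impIN {Γ Δ φ ψ} : Deriv Γ Δ .pos φ → Deriv Γ Δ .neg ψ → Deriv Γ Δ .neg (.impl φ ψ)
  | impE1N {Γ Δ φ ψ} : Deriv Γ Δ .neg (.impl φ ψ) → Deriv Γ Δ .pos φ
  | impE2N {Γ Δ φ ψ} : Deriv Γ Δ .neg (.impl φ ψ) → Deriv Γ Δ .neg ψ
  -- conjunction
  | andI {Γ Δ φ ψ} : Deriv Γ Δ .pos φ → Deriv Γ Δ .pos ψ → Deriv Γ Δ .pos (.conj φ ψ)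
  | andE1 {Γ Δ φ ψ} : Deriv Γ Δ .pos (.conj φ ψ) → Deriv Γ Δ .pos φ
  | andE2 {Γ Δ φ ψ} : Deriv Γ Δ .pos (.conj φ ψ) → Deriv Γ Δ .pos ψ
  | andI1N {Γ Δ φ ψ} : Deriv Γ Δ .neg φ → Deriv Γ Δ .neg (.conj φ ψ)
  | andI2N {Γ Δ φ ψ} : Deriv Γ Δ .neg ψ → Deriv Γ Δ .neg (.conj φ ψ)
  | andEN {Γ Δ φ ψ s χ} : Deriv Γ Δ .neg (.conj φ ψ) →
      Deriv Γ (insert φ Δ) s χ → Deriv Γ (insert ψ Δ) s χ → Deriv Γ Δ s χ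
  -- disjunction
  | orI1 {Γ Δ φ ψ} : Deriv Γ Δ .pos φ → Deriv Γ Δ .pos (.disj φ ψ)
  | orI2 {Γ Δ φ ψ} : Deriv Γ Δ .pos ψ → Deriv Γ Δ .pos (.disj φ ψ)
  | orE {Γ Δ φ ψ s χ} : Deriv Γ Δ .pos (.disj φ ψ) →
      Deriv (insert φ Γ) Δ s χ → Deriv (insert ψ Γ) Δ s χ → Deriv Γ Δ s χ
  | orIN {Γ Δ φ ψ} : Deriv Γ Δ .neg φ → Deriv Γ Δ .neg ψ → Deriv Γ Δ .neg (.disj φ ψ)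
  | orE1N {Γ Δ φ ψ} : Deriv Γ Δ .neg (.disj φ ψ) → Deriv Γ Δ .neg φ
  | orE2N {Γ Δ φ ψ} : Deriv Γ Δ .neg (.disj φ ψ) → Deriv Γ Δ .neg ψ
  -- co-implication
  | coimpI {Γ Δ φ ψ} : Deriv Γ Δ .pos φ → Deriv Γ Δ .neg ψ → Deriv Γ Δ .pos (.coimpl φ ψ)
  | coimpE1 {Γ Δ φ ψ} : Deriv Γ Δ .pos (.coimpl φ ψ) → Deriv Γ Δ .pos φ
  | coimpE2 {Γ Δ φ ψ} : Deriv Γ Δ .pos (.coimpl φ ψ) → Deriv Γ Δ .neg ψ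
  | coimpIN {Γ Δ φ ψ} : Deriv Γ (insert ψ Δ) .neg φ → Deriv Γ Δ .neg (.coimpl φ ψ)
  | coimpEN {Γ Δ φ ψ} : Deriv Γ Δ .neg (.coimpl φ ψ) → Deriv Γ Δ .neg ψ → Deriv Γ Δ .neg φ
  -- ⊥(+) and ⊤(−): from a proof of ⊥ / refutation of ⊤, conclude any formula on either side
  | botP {Γ Δ s φ} : Deriv Γ Δ .pos Formula.bot → Deriv Γ Δ s φ
  | topN {Γ Δ s φ} : Deriv Γ Δ .neg Formula.top → Deriv Γ Δ s φ
  -- coordination rules PR(+) and PR(−)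
  | prP {Γ Δ φ ψ} : Deriv Γ Δ .pos φ → Deriv Γ Δ .neg φ → Deriv Γ Δ .pos ψ
  | prN {Γ Δ φ ψ} : Deriv Γ Δ .pos φ → Deriv Γ Δ .neg φ → Deriv Γ Δ .neg ψ

/-- The conclusion occurrence of the deduction is the endpoint of a (potential maximal)
segment: it is the conclusion of an introduction rule, or the conclusion of an
application of `E∨(+)` or `E∧(−)` one of whose minor premises is the endpoint of
such a segment. -/
def Deriv.endsSeg : ∀ {Γ Δ : Set Formula} {s : Side} {φ : Formula}, Deriv Γ Δ s φ → Prop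
  | _, _, _, _, .topP => True
  | _, _, _, _, .botN => True
  | _, _, _, _, .impI _ => True
  | _, _, _, _, .impIN _ _ => True
  | _, _, _, _, .andI _ _ => True
  | _, _, _, _, .andI1N _ => True
  | _, _, _, _, .andI2N _ => True
  | _, _, _, _, .orI1 _ => True
  | _, _, _, _, .orI2 _ => True
  | _, _, _, _, .orIN _ _ => True
  | _, _, _, _, .coimpI _ _ => True
  | _, _, _, _, .coimpIN _ => True
  | _, _, _, _, .orE _ e f => e.endsSeg ∨ f.endsSeg
  | _, _, _, _, .andEN _ e f => e.endsSeg ∨ f.endsSeg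
  | _, _, _, _, _ => False

/-- The deduction is in normal form: it contains no maximal segments, i.e. no sequence
of formula occurrences of the same shape starting at the conclusion of an introduction
rule, passing only through minor premises of `E∨(+)` / `E∧(−)`, and ending at the major
premise of an elimination rule. -/
def Deriv.normal : ∀ {Γ Δ : Set Formula} {s : Side} {φ : Formula}, Deriv Γ Δ s φ → Prop
  | _, _, _, _, .hypP _ => True
  | _, _, _, _, .hypN _ => True
  | _, _, _, _, .topP => True
  | _, _, _, _, .botN => True
  | _, _, _, _, .impI d => d.normal
  | _, _, _, _, .impE d e => ¬ d.endsSeg ∧ d.normal ∧ e.normal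
  | _, _, _, _, .impIN d e => d.normal ∧ e.normal
  | _, _, _, _, .impE1N d => ¬ d.endsSeg ∧ d.normal
  | _, _, _, _, .impE2N d => ¬ d.endsSeg ∧ d.normal
  | _, _, _, _, .andI d e => d.normal ∧ e.normal
  | _, _, _, _, .andE1 d => ¬ d.endsSeg ∧ d.normal
  | _, _, _, _, .andE2 d => ¬ d.endsSeg ∧ d.normal
  | _, _, _, _, .andI1N d => d.normal
  | _, _, _, _, .andI2N d => d.normal
  | _, _, _, _, .andEN d e f => ¬ d.endsSeg ∧ d.normal ∧ e.normal ∧ f.normal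
  | _, _, _, _, .orI1 d => d.normal
  | _, _, _, _, .orI2 d => d.normal
  | _, _, _, _, .orE d e f => ¬ d.endsSeg ∧ d.normal ∧ e.normal ∧ f.normal
  | _, _, _, _, .orIN d e => d.normal ∧ e.normal
  | _, _, _, _, .orE1N d => ¬ d.endsSeg ∧ d.normal
  | _, _, _, _, .orE2N d => ¬ d.endsSeg ∧ d.normal
  | _, _, _, _, .coimpI d e => d.normal ∧ e.normal
  | _, _, _, _, .coimpE1 d => ¬ d.endsSeg ∧ d.normal
  | _, _, _, _, .coimpE2 d => ¬ d.endsSeg ∧ d.normal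
  | _, _, _, _, .coimpIN d => d.normal
  | _, _, _, _, .coimpEN d e => ¬ d.endsSeg ∧ d.normal ∧ e.normal
  | _, _, _, _, .botP d => d.normal
  | _, _, _, _, .topN d => d.normal
  | _, _, _, _, .prP d e => d.normal ∧ e.normal
  | _, _, _, _, .prN d e => d.normal ∧ e.normal

/-- The deduction ends with an application of an introduction rule
(including the axioms `⊤(+)` and `⊥(−)`). -/
def Deriv.endsIntro : ∀ {Γ Δ : Set Formula} {s : Side} {φ : Formula}, Deriv Γ Δ s φ → Prop
  | _, _, _, _, .topP => True
  | _, _, _, _, .botN => True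
  | _, _, _, _, .impI _ => True
  | _, _, _, _, .impIN _ _ => True
  | _, _, _, _, .andI _ _ => True
  | _, _, _, _, .andI1N _ => True
  | _, _, _, _, .andI2N _ => True
  | _, _, _, _, .orI1 _ => True
  | _, _, _, _, .orI2 _ => True
  | _, _, _, _, .orIN _ _ => True
  | _, _, _, _, .coimpI _ _ => True
  | _, _, _, _, .coimpIN _ => True
  | _, _, _, _, _ => False

/-- The pair of sets of undischarged proof hypotheses and undischarged refutation
hypotheses actually used in the deduction. -/
def Deriv.opens : ∀ {Γ Δ : Set Formula} {s : Side} {φ : Formula},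
    Deriv Γ Δ s φ → Set Formula × Set Formula
  | _, _, _, _, .hypP (φ := χ) _ => ({χ}, ∅)
  | _, _, _, _, .hypN (φ := χ) _ => (∅, {χ})
  | _, _, _, _, .topP => (∅, ∅)
  | _, _, _, _, .botN => (∅, ∅)
  | _, _, _, _, .impI (φ := χ) d => (d.opens.1 \ {χ}, d.opens.2)
  | _, _, _, _, .impE d e => (d.opens.1 ∪ e.opens.1, d.opens.2 ∪ e.opens.2)
  | _, _, _, _, .impIN d e => (d.opens.1 ∪ e.opens.1, d.opens.2 ∪ e.opens.2)
  | _, _, _, _, .impE1N d => d.opens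
  | _, _, _, _, .impE2N d => d.opens
  | _, _, _, _, .andI d e => (d.opens.1 ∪ e.opens.1, d.opens.2 ∪ e.opens.2)
  | _, _, _, _, .andE1 d => d.opens
  | _, _, _, _, .andE2 d => d.opens
  | _, _, _, _, .andI1N d => d.opens
  | _, _, _, _, .andI2N d => d.opens
  | _, _, _, _, .andEN (φ := χ) (ψ := ρ) d e f =>
      (d.opens.1 ∪ e.opens.1 ∪ f.opens.1,
       d.opens.2 ∪ (e.opens.2 \ {χ}) ∪ (f.opens.2 \ {ρ}))
  | _, _, _, _, .orI1 d => d.opens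
  | _, _, _, _, .orI2 d => d.opens
  | _, _, _, _, .orE (φ := χ) (ψ := ρ) d e f =>
      (d.opens.1 ∪ (e.opens.1 \ {χ}) ∪ (f.opens.1 \ {ρ}),
       d.opens.2 ∪ e.opens.2 ∪ f.opens.2)
  | _, _, _, _, .orIN d e => (d.opens.1 ∪ e.opens.1, d.opens.2 ∪ e.opens.2)
  | _, _, _, _, .orE1N d => d.opens
  | _, _, _, _, .orE2N d => d.opens
  | _, _, _, _, .coimpI d e => (d.opens.1 ∪ e.opens.1, d.opens.2 ∪ e.opens.2)
  | _, _, _, _, .coimpE1 d => d.opens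
  | _, _, _, _, .coimpE2 d => d.opens
  | _, _, _, _, .coimpIN (ψ := ρ) d => (d.opens.1, d.opens.2 \ {ρ})
  | _, _, _, _, .coimpEN d e => (d.opens.1 ∪ e.opens.1, d.opens.2 ∪ e.opens.2)
  | _, _, _, _, .botP d => d.opens
  | _, _, _, _, .topN d => d.opens
  | _, _, _, _, .prP d e => (d.opens.1 ∪ e.opens.1, d.opens.2 ∪ e.opens.2)
  | _, _, _, _, .prN d e => (d.opens.1 ∪ e.opens.1, d.opens.2 ∪ e.opens.2)


/-- Classical Boolean valuation of formulas. -/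
def evalF (v : ℕ → Bool) : Formula → Bool
  | .atom .bot => false
  | .atom .top => true
  | .atom (.prop n) => v n
  | .conj a b => evalF v a && evalF v b
  | .disj a b => evalF v a || evalF v b
  | .impl a b => !evalF v a || evalF v b
  | .coimpl a b => evalF v a && !evalF v b

/-- Soundness of `BPR` with respect to the classical Boolean semantics, relative to
the open hypotheses actually used. -/
theorem Deriv.sound {Γ Δ : Set Formula} {s : Side} {φ : Formula} (D : Deriv Γ Δ s φ)
    (v : ℕ → Bool)
    (h1 : ∀ ψ ∈ D.opens.1, evalF v ψ = true)
    (h2 : ∀ ψ ∈ D.opens.2, evalF v ψ = false) :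
    (s = .pos → evalF v φ = true) ∧ (s = .neg → evalF v φ = false) := by
  induction D with
  | hypP h =>
    exact ⟨fun _ => h1 _ rfl, fun h => nomatch h⟩
  | hypN h =>
    exact ⟨fun h => (nomatch h), fun _ => h2 _ rfl⟩
  | topP =>
    exact ⟨fun _ => rfl, fun h => nomatch h⟩
  | botN =>
    exact ⟨fun h => (nomatch h), fun _ => rfl⟩
  | @impI Γ Δ χ ρ d ih =>
    refine ⟨fun _ => ?_, fun h => nomatch h⟩
    by_cases hχ : evalF v χ = true
    · have hd1 : ∀ ψ ∈ d.opens.1, evalF v ψ = true := by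
        intro ψ hm
        by_cases hc : ψ = χ
        · subst hc; exact hχ
        · exact h1 ψ ⟨hm, hc⟩
      have A := (ih hd1 h2).1 rfl
      simp [evalF, A]
    · have hχf : evalF v χ = false := by simpa using hχ
      simp [evalF, hχf]
  | impE d e ihd ihe =>
    have A := (ihd (fun ψ h => h1 ψ (Or.inl h)) (fun ψ h => h2 ψ (Or.inl h))).1 rfl
    have B := (ihe (fun ψ h => h1 ψ (Or.inr h)) (fun ψ h => h2 ψ (Or.inr h))).1 rfl
    refine ⟨fun _ => ?_, fun h => nomatch h⟩
    simp [evalF, B] at A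
    exact A
  | impIN d e ihd ihe =>
    have A := (ihd (fun ψ h => h1 ψ (Or.inl h)) (fun ψ h => h2 ψ (Or.inl h))).1 rfl
    have B := (ihe (fun ψ h => h1 ψ (Or.inr h)) (fun ψ h => h2 ψ (Or.inr h))).2 rfl
    exact ⟨fun h => (nomatch h), fun _ => by simp [evalF, A, B]⟩
  | impE1N d ih =>
    have A := (ih h1 h2).2 rfl
    simp [evalF] at A
    exact ⟨fun _ => A.1, fun h => nomatch h⟩
  | impE2N d ih =>
    have A := (ih h1 h2).2 rfl
    simp [evalF] at A
    exact ⟨fun h => (nomatch h), fun _ => A.2⟩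
  | andI d e ihd ihe =>
    have A := (ihd (fun ψ h => h1 ψ (Or.inl h)) (fun ψ h => h2 ψ (Or.inl h))).1 rfl
    have B := (ihe (fun ψ h => h1 ψ (Or.inr h)) (fun ψ h => h2 ψ (Or.inr h))).1 rfl
    exact ⟨fun _ => by simp [evalF, A, B], fun h => nomatch h⟩
  | andE1 d ih =>
    have A := (ih h1 h2).1 rfl
    simp [evalF] at A
    exact ⟨fun _ => A.1, fun h => nomatch h⟩
  | andE2 d ih =>
    have A := (ih h1 h2).1 rfl
    simp [evalF] at A
    exact ⟨fun _ => A.2, fun h => nomatch h⟩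
  | andI1N d ih =>
    have A := (ih h1 h2).2 rfl
    exact ⟨fun h => (nomatch h), fun _ => by simp [evalF, A]⟩
  | andI2N d ih =>
    have A := (ih h1 h2).2 rfl
    exact ⟨fun h => (nomatch h), fun _ => by simp [evalF, A]⟩
  | @andEN Γ Δ χ ρ s' τ d e f ihd ihe ihf =>
    have A := (ihd (fun ψ h => h1 ψ (Or.inl (Or.inl h)))
      (fun ψ h => h2 ψ (Or.inl (Or.inl h)))).2 rfl
    by_cases hχ : evalF v χ = true
    · have hρ : evalF v ρ = false := by simpa [evalF, hχ] using A
      exact ihf (fun ψ h => h1 ψ (Or.inr h))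
        (fun ψ h => by
          by_cases hc : ψ = ρ
          · subst hc; exact hρ
          · exact h2 ψ (Or.inr ⟨h, hc⟩))
    · have hχf : evalF v χ = false := by simpa using hχ
      exact ihe (fun ψ h => h1 ψ (Or.inl (Or.inr h)))
        (fun ψ h => by
          by_cases hc : ψ = χ
          · subst hc; exact hχf
          · exact h2 ψ (Or.inl (Or.inr ⟨h, hc⟩)))
  | orI1 d ih =>
    have A := (ih h1 h2).1 rfl
    exact ⟨fun _ => by simp [evalF, A], fun h => nomatch h⟩
  | orI2 d ih =>
    have A := (ih h1 h2).1 rfl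
    exact ⟨fun _ => by simp [evalF, A], fun h => nomatch h⟩
  | @orE Γ Δ χ ρ s' τ d e f ihd ihe ihf =>
    have A := (ihd (fun ψ h => h1 ψ (Or.inl (Or.inl h)))
      (fun ψ h => h2 ψ (Or.inl (Or.inl h)))).1 rfl
    by_cases hχ : evalF v χ = true
    · exact ihe
        (fun ψ h => by
          by_cases hc : ψ = χ
          · subst hc; exact hχ
          · exact h1 ψ (Or.inl (Or.inr ⟨h, hc⟩)))
        (fun ψ h => h2 ψ (Or.inl (Or.inr h)))
    · have hχf : evalF v χ = false := by simpa using hχ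
      have hρ : evalF v ρ = true := by simpa [evalF, hχf] using A
      exact ihf
        (fun ψ h => by
          by_cases hc : ψ = ρ
          · subst hc; exact hρ
          · exact h1 ψ (Or.inr ⟨h, hc⟩))
        (fun ψ h => h2 ψ (Or.inr h))
  | orIN d e ihd ihe =>
    have A := (ihd (fun ψ h => h1 ψ (Or.inl h)) (fun ψ h => h2 ψ (Or.inl h))).2 rfl
    have B := (ihe (fun ψ h => h1 ψ (Or.inr h)) (fun ψ h => h2 ψ (Or.inr h))).2 rfl
    exact ⟨fun h => (nomatch h), fun _ => by simp [evalF, A, B]⟩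
  | orE1N d ih =>
    have A := (ih h1 h2).2 rfl
    simp [evalF] at A
    exact ⟨fun h => (nomatch h), fun _ => A.1⟩
  | orE2N d ih =>
    have A := (ih h1 h2).2 rfl
    simp [evalF] at A
    exact ⟨fun h => (nomatch h), fun _ => A.2⟩
  | coimpI d e ihd ihe =>
    have A := (ihd (fun ψ h => h1 ψ (Or.inl h)) (fun ψ h => h2 ψ (Or.inl h))).1 rfl
    have B := (ihe (fun ψ h => h1 ψ (Or.inr h)) (fun ψ h => h2 ψ (Or.inr h))).2 rfl
    exact ⟨fun _ => by simp [evalF, A, B], fun h => nomatch h⟩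
  | coimpE1 d ih =>
    have A := (ih h1 h2).1 rfl
    simp [evalF] at A
    exact ⟨fun _ => A.1, fun h => nomatch h⟩
  | coimpE2 d ih =>
    have A := (ih h1 h2).1 rfl
    simp [evalF] at A
    exact ⟨fun h => (nomatch h), fun _ => A.2⟩
  | @coimpIN Γ Δ χ ρ d ih =>
    refine ⟨fun h => (nomatch h), fun _ => ?_⟩
    by_cases hρ : evalF v ρ = true
    · simp [evalF, hρ]
    · have hρf : evalF v ρ = false := by simpa using hρ
      have A := (ih h1 (fun ψ h => by
        by_cases hc : ψ = ρ
        · subst hc; exact hρf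
        · exact h2 ψ ⟨h, hc⟩)).2 rfl
      simp [evalF, A]
  | coimpEN d e ihd ihe =>
    have A := (ihd (fun ψ h => h1 ψ (Or.inl h)) (fun ψ h => h2 ψ (Or.inl h))).2 rfl
    have B := (ihe (fun ψ h => h1 ψ (Or.inr h)) (fun ψ h => h2 ψ (Or.inr h))).2 rfl
    refine ⟨fun h => (nomatch h), fun _ => ?_⟩
    simp [evalF, B] at A
    exact A
  | botP d ih =>
    have A := (ih h1 h2).1 rfl
    simp [evalF] at A
  | topN d ih =>
    have A := (ih h1 h2).2 rfl
    simp [evalF] at A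
  | prP d e ihd ihe =>
    have A := (ihd (fun ψ h => h1 ψ (Or.inl h)) (fun ψ h => h2 ψ (Or.inl h))).1 rfl
    have B := (ihe (fun ψ h => h1 ψ (Or.inr h)) (fun ψ h => h2 ψ (Or.inr h))).2 rfl
    simp [A] at B
  | prN d e ihd ihe =>
    have A := (ihd (fun ψ h => h1 ψ (Or.inl h)) (fun ψ h => h2 ψ (Or.inl h))).1 rfl
    have B := (ihe (fun ψ h => h1 ψ (Or.inr h)) (fun ψ h => h2 ψ (Or.inr h))).2 rfl
    simp [A] at B

/-- A derivation with no open hypotheses is semantically correct. -/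
theorem Deriv.empty_eval {Γ Δ : Set Formula} {s : Side} {φ : Formula} (d : Deriv Γ Δ s φ)
    (he : d.opens.1 ∪ d.opens.2 = ∅) (v : ℕ → Bool) :
    (s = .pos → evalF v φ = true) ∧ (s = .neg → evalF v φ = false) := by
  have h := Set.eq_empty_iff_forall_notMem.mp he
  exact d.sound v (fun ψ hm => ((h ψ) (Or.inl hm)).elim)
    (fun ψ hm => ((h ψ) (Or.inr hm)).elim)

/-- A derivation ending in an introduction rule ends a (potential maximal) segment. -/
theorem Deriv.endsIntro_endsSeg {Γ Δ : Set Formula} {s : Side} {φ : Formula}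
    (D : Deriv Γ Δ s φ) (h : D.endsIntro) : D.endsSeg := by
  cases D <;> first | exact trivial | exact False.elim h

/-- If `D` is a normal-form derivation in `BPR` that does not end in
an application of an introduction rule, then `D` contains at least one undischarged
hypothesis (proof assumption or refutation assumption). -/
theorem normal_not_intro_has_open_hyp (Γ Δ : Set Formula) (s : Side) (φ : Formula)
    (D : Deriv Γ Δ s φ) (hnorm : D.normal) (hnotintro : ¬ D.endsIntro) :
    (D.opens.1 ∪ D.opens.2).Nonempty := by
  induction D with
  | @hypP Γ Δ χ h =>
    exact ⟨χ, Or.inl rfl⟩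
  | @hypN Γ Δ χ h =>
    exact ⟨χ, Or.inr rfl⟩
  | topP => exact (hnotintro trivial).elim
  | botN => exact (hnotintro trivial).elim
  | impI d ih => exact (hnotintro trivial).elim
  | impIN d e ihd ihe => exact (hnotintro trivial).elim
  | andI d e ihd ihe => exact (hnotintro trivial).elim
  | andI1N d ih => exact (hnotintro trivial).elim
  | andI2N d ih => exact (hnotintro trivial).elim
  | orI1 d ih => exact (hnotintro trivial).elim
  | orI2 d ih => exact (hnotintro trivial).elim
  | orIN d e ihd ihe => exact (hnotintro trivial).elim
  | coimpI d e ihd ihe => exact (hnotintro trivial).elim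
  | coimpIN d ih => exact (hnotintro trivial).elim
  | impE d e ihd ihe =>
    obtain ⟨hs, hn, _⟩ := hnorm
    obtain ⟨x, hx⟩ := ihd hn (fun hi => hs (d.endsIntro_endsSeg hi))
    exact ⟨x, hx.imp Or.inl Or.inl⟩
  | impE1N d ih =>
    obtain ⟨hs, hn⟩ := hnorm
    exact ih hn (fun hi => hs (d.endsIntro_endsSeg hi))
  | impE2N d ih =>
    obtain ⟨hs, hn⟩ := hnorm
    exact ih hn (fun hi => hs (d.endsIntro_endsSeg hi))
  | andE1 d ih =>
    obtain ⟨hs, hn⟩ := hnorm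
    exact ih hn (fun hi => hs (d.endsIntro_endsSeg hi))
  | andE2 d ih =>
    obtain ⟨hs, hn⟩ := hnorm
    exact ih hn (fun hi => hs (d.endsIntro_endsSeg hi))
  | andEN d e f ihd ihe ihf =>
    obtain ⟨hs, hn, _, _⟩ := hnorm
    obtain ⟨x, hx⟩ := ihd hn (fun hi => hs (d.endsIntro_endsSeg hi))
    exact ⟨x, hx.imp (fun h => Or.inl (Or.inl h)) (fun h => Or.inl (Or.inl h))⟩
  | orE d e f ihd ihe ihf =>
    obtain ⟨hs, hn, _, _⟩ := hnorm
    obtain ⟨x, hx⟩ := ihd hn (fun hi => hs (d.endsIntro_endsSeg hi))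
    exact ⟨x, hx.imp (fun h => Or.inl (Or.inl h)) (fun h => Or.inl (Or.inl h))⟩
  | orE1N d ih =>
    obtain ⟨hs, hn⟩ := hnorm
    exact ih hn (fun hi => hs (d.endsIntro_endsSeg hi))
  | orE2N d ih =>
    obtain ⟨hs, hn⟩ := hnorm
    exact ih hn (fun hi => hs (d.endsIntro_endsSeg hi))
  | coimpE1 d ih =>
    obtain ⟨hs, hn⟩ := hnorm
    exact ih hn (fun hi => hs (d.endsIntro_endsSeg hi))
  | coimpE2 d ih =>
    obtain ⟨hs, hn⟩ := hnorm
    exact ih hn (fun hi => hs (d.endsIntro_endsSeg hi))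
  | coimpEN d e ihd ihe =>
    obtain ⟨hs, hn, _⟩ := hnorm
    obtain ⟨x, hx⟩ := ihd hn (fun hi => hs (d.endsIntro_endsSeg hi))
    exact ⟨x, hx.imp Or.inl Or.inl⟩
  | botP d ih =>
    rcases Set.eq_empty_or_nonempty (d.opens.1 ∪ d.opens.2) with he | hne
    · have A := (d.empty_eval he (fun _ => false)).1 rfl
      simp [evalF] at A
    · exact hne
  | topN d ih =>
    rcases Set.eq_empty_or_nonempty (d.opens.1 ∪ d.opens.2) with he | hne
    · have A := (d.empty_eval he (fun _ => false)).2 rfl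
      simp [evalF] at A
    · exact hne
  | prP d e ihd ihe =>
    rcases Set.eq_empty_or_nonempty (d.opens.1 ∪ d.opens.2) with hed | ⟨x, hx⟩
    · rcases Set.eq_empty_or_nonempty (e.opens.1 ∪ e.opens.2) with hee | ⟨x, hx⟩
      · have A := (d.empty_eval hed (fun _ => false)).1 rfl
        have B := (e.empty_eval hee (fun _ => false)).2 rfl
        simp [A] at B
      · exact ⟨x, hx.imp Or.inr Or.inr⟩
    · exact ⟨x, hx.imp Or.inl Or.inl⟩
  | prN d e ihd ihe =>
    rcases Set.eq_empty_or_nonempty (d.opens.1 ∪ d.opens.2) with hed | ⟨x, hx⟩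
    · rcases Set.eq_empty_or_nonempty (e.opens.1 ∪ e.opens.2) with hee | ⟨x, hx⟩
      · have A := (d.empty_eval hed (fun _ => false)).1 rfl
        have B := (e.empty_eval hee (fun _ => false)).2 rfl
        simp [A] at B
      · exact ⟨x, hx.imp Or.inr Or.inr⟩
    · exact ⟨x, hx.imp Or.inl Or.inl⟩
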